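/- Let a < b, let γ : ℝ → ℝ be C¹, and suppose h, μ : [a,b] × [0,T] → ℝ are sufficiently smooth and satisfy, for all x ∈ (a,b) and t ∈ (0,T): ∂ₜh = ∂ₓ( ∂ₓμ/√(1 + (∂ₓh)²) ), μ = γ(h)·κ + γ'(h)/√(1 + (∂ₓh)²) with κ = -∂ₓₓh/(1 + (∂ₓh)²)^{3/2}, together with boundary conditions ∂ₓh(a,t) = ∂ₓh(b,t) = 0 and ∂ₓμ(a,t) = ∂ₓμ(b,t) = 0. Then the free energy W(t) = ∫ₐᵇ γ(h(x,t))·√(1 + (∂ₓh(x,t))²) dx satisfies dW/dt = -∫ₐᵇ (∂ₓμ)²/√(1 + (∂ₓh)²) dx ≤ 0; in particular W is non-increasing in time. -/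

import Mathlib

open Real Set

noncomputable def pdx (u : ℝ × ℝ → ℝ) (p : ℝ × ℝ) : ℝ := fderiv ℝ u p (1, 0)
noncomputable def pdt (u : ℝ × ℝ → ℝ) (p : ℝ × ℝ) : ℝ := fderiv ℝ u p (0, 1)

theorem hasDerivAt_pdx {u : ℝ × ℝ → ℝ} (hu : ContDiff ℝ (⊤ : ℕ∞) u) (x t : ℝ) :
    HasDerivAt (fun z => u (z, t)) (pdx u (x, t)) x := by
  have h1 : HasDerivAt (fun z : ℝ => (z, t)) ((1 : ℝ), (0 : ℝ)) x :=
    (hasDerivAt_id x).prodMk (hasDerivAt_const x t)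
  exact (hu.differentiable (by simp) (x, t)).hasFDerivAt.comp_hasDerivAt x h1

theorem hasDerivAt_pdt {u : ℝ × ℝ → ℝ} (hu : ContDiff ℝ (⊤ : ℕ∞) u) (x t : ℝ) :
    HasDerivAt (fun s => u (x, s)) (pdt u (x, t)) t := by
  have h1 : HasDerivAt (fun s : ℝ => (x, s)) ((0 : ℝ), (1 : ℝ)) t :=
    (hasDerivAt_const t x).prodMk (hasDerivAt_id t)
  exact (hu.differentiable (by simp) (x, t)).hasFDerivAt.comp_hasDerivAt t h1

theorem contDiff_pdx {u : ℝ × ℝ → ℝ} (hu : ContDiff ℝ (⊤ : ℕ∞) u) : ContDiff ℝ (⊤ : ℕ∞) (pdx u) :=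
  (hu.fderiv_right (by simp)).clm_apply contDiff_const

theorem contDiff_pdt {u : ℝ × ℝ → ℝ} (hu : ContDiff ℝ (⊤ : ℕ∞) u) : ContDiff ℝ (⊤ : ℕ∞) (pdt u) :=
  (hu.fderiv_right (by simp)).clm_apply contDiff_const

/-- Clairaut. -/
theorem clairaut {u : ℝ × ℝ → ℝ} (hu : ContDiff ℝ (⊤ : ℕ∞) u) (p : ℝ × ℝ) :
    pdt (pdx u) p = pdx (pdt u) p := by
  have hD : ContDiff ℝ (⊤ : ℕ∞) (fderiv ℝ u) := hu.fderiv_right (by simp)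
  have hDp : HasFDerivAt (fderiv ℝ u) (fderiv ℝ (fderiv ℝ u) p) p :=
    (hD.differentiable (by simp) p).hasFDerivAt
  have sym := second_derivative_symmetric
    (fun y => (hu.differentiable (by simp) y).hasFDerivAt) hDp
  have e1 : HasFDerivAt (pdx u)
      (((ContinuousLinearMap.apply ℝ ℝ ((1:ℝ),(0:ℝ))).comp (fderiv ℝ (fderiv ℝ u) p))) p :=
    (ContinuousLinearMap.apply ℝ ℝ ((1:ℝ),(0:ℝ))).hasFDerivAt.comp p hDp
  have e2 : HasFDerivAt (pdt u)
      (((ContinuousLinearMap.apply ℝ ℝ ((0:ℝ),(1:ℝ))).comp (fderiv ℝ (fderiv ℝ u) p))) p :=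
    (ContinuousLinearMap.apply ℝ ℝ ((0:ℝ),(1:ℝ))).hasFDerivAt.comp p hDp
  have := sym ((0:ℝ),(1:ℝ)) ((1:ℝ),(0:ℝ))
  calc pdt (pdx u) p = fderiv ℝ (pdx u) p (0,1) := rfl
    _ = fderiv ℝ (fderiv ℝ u) p (0,1) (1,0) := by rw [e1.fderiv]; rfl
    _ = fderiv ℝ (fderiv ℝ u) p (1,0) (0,1) := this
    _ = fderiv ℝ (pdt u) p (1,0) := by rw [e2.fderiv]; rfl
    _ = pdx (pdt u) p := rfl

theorem stepA {γ : ℝ → ℝ} (hγ : ContDiff ℝ 1 γ) {u : ℝ × ℝ → ℝ} (hu : ContDiff ℝ (⊤ : ℕ∞) u)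
    (x t : ℝ) :
    HasDerivAt (fun s => γ (u (x, s)) * Real.sqrt (1 + (pdx u (x, s)) ^ 2))
      (deriv γ (u (x, t)) * pdt u (x, t) * Real.sqrt (1 + (pdx u (x, t)) ^ 2)
        + γ (u (x, t)) * (pdx u (x, t) * pdt (pdx u) (x, t)
            / Real.sqrt (1 + (pdx u (x, t)) ^ 2))) t := by
  have h0 : (0:ℝ) < 1 + (pdx u (x, t)) ^ 2 := by positivity
  have hq : (0:ℝ) < Real.sqrt (1 + (pdx u (x, t)) ^ 2) := Real.sqrt_pos.2 h0
  have d1 : HasDerivAt (fun s => γ (u (x, s))) (deriv γ (u (x, t)) * pdt u (x, t)) t :=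
    ((hγ.differentiable one_ne_zero _).hasDerivAt).comp t (hasDerivAt_pdt hu x t)
  have d2 : HasDerivAt (fun s => 1 + (pdx u (x, s)) ^ 2)
      (0 + (2:ℕ) * (pdx u (x, t)) ^ (2-1) * pdt (pdx u) (x, t)) t :=
    (hasDerivAt_const t 1).add ((hasDerivAt_pdt (contDiff_pdx hu) x t).pow 2)
  have d3 : HasDerivAt (fun s => Real.sqrt (1 + (pdx u (x, s)) ^ 2))
      (1 / (2 * Real.sqrt (1 + (pdx u (x, t)) ^ 2))
        * (0 + (2:ℕ) * (pdx u (x, t)) ^ (2-1) * pdt (pdx u) (x, t))) t :=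
    (Real.hasDerivAt_sqrt h0.ne').comp t d2
  have := d1.mul d3
  refine this.congr_deriv (Eq.symm ?_)
  field_simp
  ring

noncomputable def PP (γ : ℝ → ℝ) (u : ℝ × ℝ → ℝ) (p : ℝ × ℝ) : ℝ :=
  deriv γ (u p) * pdt u p * Real.sqrt (1 + (pdx u p) ^ 2)
    + γ (u p) * (pdx u p * pdt (pdx u) p / Real.sqrt (1 + (pdx u p) ^ 2))

theorem contQ {u : ℝ × ℝ → ℝ} (hu : ContDiff ℝ (⊤ : ℕ∞) u) :
    Continuous fun p => Real.sqrt (1 + (pdx u p) ^ 2) :=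
  (continuous_const.add ((contDiff_pdx hu).continuous.pow 2)).sqrt

theorem Qpos {u : ℝ × ℝ → ℝ} (p : ℝ × ℝ) : 0 < Real.sqrt (1 + (pdx u p) ^ 2) :=
  Real.sqrt_pos.2 (by positivity)

theorem contPP {γ : ℝ → ℝ} (hγ : ContDiff ℝ 1 γ) {u : ℝ × ℝ → ℝ} (hu : ContDiff ℝ (⊤ : ℕ∞) u) :
    Continuous (PP γ u) := by
  have hq := contQ hu
  exact (((hγ.continuous_deriv le_rfl).comp hu.continuous).mul
      (contDiff_pdt hu).continuous).mul hq |>.add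
    ((hγ.continuous.comp hu.continuous).mul
      ((((contDiff_pdx hu).continuous.mul
        (contDiff_pdt (contDiff_pdx hu)).continuous)).div hq fun p => (Qpos p).ne'))

theorem stepB {γ : ℝ → ℝ} (hγ : ContDiff ℝ 1 γ) {u : ℝ × ℝ → ℝ} (hu : ContDiff ℝ (⊤ : ℕ∞) u)
    (a b t : ℝ) :
    HasDerivAt (fun s => ∫ x in a..b, γ (u (x, s)) * Real.sqrt (1 + (pdx u (x, s)) ^ 2))
      (∫ x in a..b, PP γ u (x, t)) t := by
  have hΦ : Continuous fun p : ℝ × ℝ => γ (u p) * Real.sqrt (1 + (pdx u p) ^ 2) :=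
    (hγ.continuous.comp hu.continuous).mul (contQ hu)
  have hK : IsCompact ((Set.uIcc a b) ×ˢ (Metric.closedBall t 1)) :=
    isCompact_uIcc.prod (isCompact_closedBall t 1)
  obtain ⟨C, hC⟩ := hK.exists_bound_of_continuousOn (contPP hγ hu).continuousOn
  have key := intervalIntegral.hasDerivAt_integral_of_dominated_loc_of_deriv_le
    (F := fun s x => γ (u (x, s)) * Real.sqrt (1 + (pdx u (x, s)) ^ 2))
    (F' := fun s x => PP γ u (x, s)) (x₀ := t) (bound := fun _ => C) (μ := MeasureTheory.volume)
    (a := a) (b := b) (s := Metric.ball t 1) (Metric.ball_mem_nhds t one_pos)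
    (Filter.Eventually.of_forall fun s =>
      ((hΦ.comp (continuous_id.prodMk continuous_const)).aestronglyMeasurable))
    ((hΦ.comp (continuous_id.prodMk continuous_const)).intervalIntegrable a b)
    (((contPP hγ hu).comp (continuous_id.prodMk continuous_const)).aestronglyMeasurable)
    (Filter.Eventually.of_forall fun x hx s hs =>
      hC (x, s) ⟨Set.uIoc_subset_uIcc hx, Metric.ball_subset_closedBall hs⟩)
    (intervalIntegrable_const)
    (Filter.Eventually.of_forall fun x _ s _ => stepA hγ hu x s)
  exact key.2

theorem stepG {γ : ℝ → ℝ} (hγ : ContDiff ℝ 1 γ) {u v : ℝ × ℝ → ℝ}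
    (hu : ContDiff ℝ (⊤ : ℕ∞) u) (hv : ContDiff ℝ (⊤ : ℕ∞) v) (t x : ℝ)
    (hpot : v (x, t) = γ (u (x, t)) * (-(pdx (pdx u) (x, t))
        / Real.sqrt (1 + (pdx u (x, t)) ^ 2) ^ 3)
      + deriv γ (u (x, t)) / Real.sqrt (1 + (pdx u (x, t)) ^ 2))
    (heqx : pdt u (x, t)
      = deriv (fun y => pdx v (y, t) / Real.sqrt (1 + (pdx u (y, t)) ^ 2)) x) :
    HasDerivAt (fun y =>
        γ (u (y, t)) * pdx u (y, t) * pdt u (y, t) / Real.sqrt (1 + (pdx u (y, t)) ^ 2)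
          + v (y, t) * pdx v (y, t) / Real.sqrt (1 + (pdx u (y, t)) ^ 2))
      (PP γ u (x, t) + (pdx v (x, t)) ^ 2 / Real.sqrt (1 + (pdx u (x, t)) ^ 2)) x := by
  have h0 : (0:ℝ) < 1 + (pdx u (x, t)) ^ 2 := by positivity
  have hq : (0:ℝ) < Real.sqrt (1 + (pdx u (x, t)) ^ 2) := Real.sqrt_pos.2 h0
  have hq2 : Real.sqrt (1 + (pdx u (x, t)) ^ 2) ^ 2 = 1 + (pdx u (x, t)) ^ 2 :=
    Real.sq_sqrt h0.le
  have du : HasDerivAt (fun y => u (y, t)) (pdx u (x, t)) x := hasDerivAt_pdx hu x t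
  have dγ : HasDerivAt (fun y => γ (u (y, t))) (deriv γ (u (x, t)) * pdx u (x, t)) x :=
    ((hγ.differentiable one_ne_zero _).hasDerivAt).comp x du
  have dHx : HasDerivAt (fun y => pdx u (y, t)) (pdx (pdx u) (x, t)) x :=
    hasDerivAt_pdx (contDiff_pdx hu) x t
  have dHt : HasDerivAt (fun y => pdt u (y, t)) (pdx (pdt u) (x, t)) x :=
    hasDerivAt_pdx (contDiff_pdt hu) x t
  have dv : HasDerivAt (fun y => v (y, t)) (pdx v (x, t)) x := hasDerivAt_pdx hv x t
  have dMx : HasDerivAt (fun y => pdx v (y, t)) (pdx (pdx v) (x, t)) x :=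
    hasDerivAt_pdx (contDiff_pdx hv) x t
  have d2 : HasDerivAt (fun y => 1 + (pdx u (y, t)) ^ 2)
      (0 + (2:ℕ) * (pdx u (x, t)) ^ (2-1) * pdx (pdx u) (x, t)) x :=
    (hasDerivAt_const x 1).add (dHx.pow 2)
  have dQ : HasDerivAt (fun y => Real.sqrt (1 + (pdx u (y, t)) ^ 2))
      (1 / (2 * Real.sqrt (1 + (pdx u (x, t)) ^ 2))
        * (0 + (2:ℕ) * (pdx u (x, t)) ^ (2-1) * pdx (pdx u) (x, t))) x :=
    (Real.hasDerivAt_sqrt h0.ne').comp x d2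
  have dquot : HasDerivAt (fun y => pdx v (y, t) / Real.sqrt (1 + (pdx u (y, t)) ^ 2))
      ((pdx (pdx v) (x, t) * Real.sqrt (1 + (pdx u (x, t)) ^ 2)
        - pdx v (x, t) * (1 / (2 * Real.sqrt (1 + (pdx u (x, t)) ^ 2))
          * (0 + (2:ℕ) * (pdx u (x, t)) ^ (2-1) * pdx (pdx u) (x, t))))
        / Real.sqrt (1 + (pdx u (x, t)) ^ 2) ^ 2) x := dMx.div dQ hq.ne'
  have hHt : pdt u (x, t)
      = (pdx (pdx v) (x, t) * Real.sqrt (1 + (pdx u (x, t)) ^ 2)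
        - pdx v (x, t) * (1 / (2 * Real.sqrt (1 + (pdx u (x, t)) ^ 2))
          * (0 + (2:ℕ) * (pdx u (x, t)) ^ (2-1) * pdx (pdx u) (x, t))))
        / Real.sqrt (1 + (pdx u (x, t)) ^ 2) ^ 2 := by
    rw [heqx, dquot.deriv]
  have main := (((dγ.mul dHx).mul dHt).div dQ hq.ne').add ((dv.mul dMx).div dQ hq.ne')
  refine main.congr_deriv (Eq.symm ?_)
  simp only [Pi.mul_apply]
  rw [PP, clairaut hu, hpot, hHt]
  generalize (pdx u (x,t)) = Hx at *
  generalize (pdx (pdx u) (x,t)) = Hxx at *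
  generalize (pdx (pdt u) (x,t)) = Hxt at *
  generalize (pdx v (x,t)) = Mx at *
  generalize (pdx (pdx v) (x,t)) = Mxx at *
  generalize hQ : Real.sqrt (1 + Hx ^ 2) = q at *
  generalize (γ (u (x,t))) = g at *
  generalize (deriv γ (u (x,t))) = dg at *
  field_simp
  linear_combination (4*(dg*Mxx*q^4 - dg*Mx*Hx*Hxx*q^2 - g*Mxx*Hxx*q^2
    + g*Mx*Hx*Hxx^2)) * hq2

theorem stepC {γ : ℝ → ℝ} (hγ : ContDiff ℝ 1 γ) {u v : ℝ × ℝ → ℝ}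
    (hu : ContDiff ℝ (⊤ : ℕ∞) u) (hv : ContDiff ℝ (⊤ : ℕ∞) v) (a b t : ℝ) (hab : a < b)
    (hpot' : ∀ x ∈ Set.Ioo a b, v (x, t) = γ (u (x, t)) * (-(pdx (pdx u) (x, t))
        / Real.sqrt (1 + (pdx u (x, t)) ^ 2) ^ 3)
      + deriv γ (u (x, t)) / Real.sqrt (1 + (pdx u (x, t)) ^ 2))
    (heq' : ∀ x ∈ Set.Ioo a b, pdt u (x, t)
      = deriv (fun y => pdx v (y, t) / Real.sqrt (1 + (pdx u (y, t)) ^ 2)) x)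
    (hba : pdx u (a, t) = 0) (hbb : pdx u (b, t) = 0)
    (hma : pdx v (a, t) = 0) (hmb : pdx v (b, t) = 0) :
    ∫ x in a..b, PP γ u (x, t)
      = -∫ x in a..b, (pdx v (x, t)) ^ 2 / Real.sqrt (1 + (pdx u (x, t)) ^ 2) := by
  set G : ℝ → ℝ := fun y =>
    γ (u (y, t)) * pdx u (y, t) * pdt u (y, t) / Real.sqrt (1 + (pdx u (y, t)) ^ 2)
      + v (y, t) * pdx v (y, t) / Real.sqrt (1 + (pdx u (y, t)) ^ 2) with hG
  have cx : Continuous fun y : ℝ => ((y, t) : ℝ × ℝ) := continuous_id.prodMk continuous_const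
  have cQ : Continuous fun y : ℝ => Real.sqrt (1 + (pdx u (y, t)) ^ 2) := (contQ hu).comp cx
  have cQne : ∀ y : ℝ, Real.sqrt (1 + (pdx u ((y : ℝ), t)) ^ 2) ≠ 0 := fun y => (Qpos _).ne'
  have contG : Continuous G := by
    apply Continuous.add
    · exact ((((hγ.continuous.comp hu.continuous).comp cx).mul
        ((contDiff_pdx hu).continuous.comp cx)).mul
        ((contDiff_pdt hu).continuous.comp cx)).div cQ cQne
    · exact ((hv.continuous.comp cx).mul ((contDiff_pdx hv).continuous.comp cx)).div cQ cQne
  have contM2 : Continuous fun x : ℝ =>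
      (pdx v (x, t)) ^ 2 / Real.sqrt (1 + (pdx u (x, t)) ^ 2) :=
    (((contDiff_pdx hv).continuous.comp cx).pow 2).div cQ cQne
  have contP : Continuous fun x : ℝ => PP γ u (x, t) := (contPP hγ hu).comp cx
  have ftc := intervalIntegral.integral_eq_sub_of_hasDerivAt_of_le hab.le
    (f := G)
    (f' := fun x => PP γ u (x, t) + (pdx v (x, t)) ^ 2 / Real.sqrt (1 + (pdx u (x, t)) ^ 2))
    contG.continuousOn
    (fun x hx => stepG hγ hu hv t x (hpot' x hx) (heq' x hx))
    ((contP.add contM2).intervalIntegrable a b)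
  have hGa : G a = 0 := by simp [hG, hba, hma]
  have hGb : G b = 0 := by simp [hG, hbb, hmb]
  rw [hGa, hGb, intervalIntegral.integral_add (contP.intervalIntegrable a b)
    (contM2.intervalIntegrable a b)] at ftc
  linarith

theorem energy_dissipation
    (a b T : ℝ) (hab : a < b) (hT : 0 < T)
    (γ : ℝ → ℝ) (hγ : ContDiff ℝ 1 γ)
    (h μ : ℝ → ℝ → ℝ)
    (hreg_h : ContDiff ℝ (⊤ : ℕ∞) (Function.uncurry h))
    (hreg_μ : ContDiff ℝ (⊤ : ℕ∞) (Function.uncurry μ))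
    (heq : ∀ t ∈ Set.Ioo (0 : ℝ) T, ∀ x ∈ Set.Ioo a b,
      deriv (fun s => h x s) t
        = deriv (fun y => deriv (fun z => μ z t) y
            / Real.sqrt (1 + (deriv (fun z => h z t) y) ^ 2)) x)
    (hpot : ∀ t ∈ Set.Ioo (0 : ℝ) T, ∀ x ∈ Set.Ioo a b,
      μ x t = γ (h x t) *
          (-(deriv (deriv (fun z => h z t)) x)
            / (1 + (deriv (fun z => h z t) x) ^ 2) ^ ((3 : ℝ) / 2))
        + deriv γ (h x t) / Real.sqrt (1 + (deriv (fun z => h z t) x) ^ 2))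
    (hbc_h : ∀ t ∈ Set.Ioo (0 : ℝ) T,
      deriv (fun z => h z t) a = 0 ∧ deriv (fun z => h z t) b = 0)
    (hbc_μ : ∀ t ∈ Set.Ioo (0 : ℝ) T,
      deriv (fun z => μ z t) a = 0 ∧ deriv (fun z => μ z t) b = 0)
    (W : ℝ → ℝ)
    (hW : W = fun t => ∫ x in a..b,
      γ (h x t) * Real.sqrt (1 + (deriv (fun z => h z t) x) ^ 2)) :
    (∀ t ∈ Set.Ioo (0 : ℝ) T,
      HasDerivAt W
        (-∫ x in a..b,
          (deriv (fun z => μ z t) x) ^ 2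
            / Real.sqrt (1 + (deriv (fun z => h z t) x) ^ 2)) t ∧
      (-∫ x in a..b,
          (deriv (fun z => μ z t) x) ^ 2
            / Real.sqrt (1 + (deriv (fun z => h z t) x) ^ 2)) ≤ 0) ∧
    AntitoneOn W (Set.Icc 0 T) := by
  set u := Function.uncurry h with hu_def
  set v := Function.uncurry μ with hv_def
  have hu : ContDiff ℝ (⊤ : ℕ∞) u := hreg_h
  have hv : ContDiff ℝ (⊤ : ℕ∞) v := hreg_μ
  have hdx : ∀ s x : ℝ, deriv (fun z => h z s) x = pdx u (x, s) := fun s x =>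
    (hasDerivAt_pdx hu x s).deriv
  have hdt : ∀ x s : ℝ, deriv (fun s' => h x s') s = pdt u (x, s) := fun x s =>
    (hasDerivAt_pdt hu x s).deriv
  have hmx : ∀ s x : ℝ, deriv (fun z => μ z s) x = pdx v (x, s) := fun s x =>
    (hasDerivAt_pdx hv x s).deriv
  have hdxx : ∀ s x : ℝ, deriv (deriv (fun z => h z s)) x = pdx (pdx u) (x, s) := by
    intro s x
    have e : deriv (fun z => h z s) = fun y => pdx u (y, s) := funext (hdx s)
    rw [e]
    exact (hasDerivAt_pdx (contDiff_pdx hu) x s).deriv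
  have hrpow : ∀ y : ℝ, 0 ≤ y → y ^ ((3 : ℝ) / 2) = Real.sqrt y ^ 3 := by
    intro y hy
    rw [Real.sqrt_eq_rpow, ← Real.rpow_natCast (y ^ ((1:ℝ)/2)) 3, ← Real.rpow_mul hy]
    norm_num
  have hW' : W = fun s => ∫ x in a..b,
      γ (u (x, s)) * Real.sqrt (1 + (pdx u (x, s)) ^ 2) := by
    rw [hW]
    funext s
    refine intervalIntegral.integral_congr fun x _ => ?_
    rw [hdx]
    rfl
  have keyD : ∀ s : ℝ, HasDerivAt W (∫ x in a..b, PP γ u (x, s)) s := by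
    intro s
    rw [hW']
    exact stepB hγ hu a b s
  have valeq : ∀ t ∈ Set.Ioo (0:ℝ) T,
      (∫ x in a..b, PP γ u (x, t))
        = -∫ x in a..b, (deriv (fun z => μ z t) x) ^ 2
            / Real.sqrt (1 + (deriv (fun z => h z t) x) ^ 2) := by
    intro t ht
    have hpot' : ∀ x ∈ Set.Ioo a b, v (x, t) = γ (u (x, t)) * (-(pdx (pdx u) (x, t))
        / Real.sqrt (1 + (pdx u (x, t)) ^ 2) ^ 3)
          + deriv γ (u (x, t)) / Real.sqrt (1 + (pdx u (x, t)) ^ 2) := by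
      intro x hx
      have := hpot t ht x hx
      rw [hdxx, hdx, hrpow _ (by positivity)] at this
      exact this
    have heq' : ∀ x ∈ Set.Ioo a b, pdt u (x, t)
        = deriv (fun y => pdx v (y, t) / Real.sqrt (1 + (pdx u (y, t)) ^ 2)) x := by
      intro x hx
      have e : (fun y => deriv (fun z => μ z t) y
            / Real.sqrt (1 + (deriv (fun z => h z t) y) ^ 2))
          = fun y => pdx v (y, t) / Real.sqrt (1 + (pdx u (y, t)) ^ 2) := by
        funext y; rw [hmx, hdx]
      have := heq t ht x hx
      rw [hdt, e] at this
      exact this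
    have hba := (hbc_h t ht).1; have hbb := (hbc_h t ht).2
    have hma := (hbc_μ t ht).1; have hmb := (hbc_μ t ht).2
    rw [hdx] at hba hbb; rw [hmx] at hma hmb
    rw [stepC hγ hu hv a b t hab hpot' heq' hba hbb hma hmb]
    congr 1
    refine intervalIntegral.integral_congr fun x _ => ?_
    rw [hmx, hdx]
  have main : ∀ t ∈ Set.Ioo (0 : ℝ) T,
      HasDerivAt W
        (-∫ x in a..b, (deriv (fun z => μ z t) x) ^ 2
            / Real.sqrt (1 + (deriv (fun z => h z t) x) ^ 2)) t ∧
      (-∫ x in a..b, (deriv (fun z => μ z t) x) ^ 2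
            / Real.sqrt (1 + (deriv (fun z => h z t) x) ^ 2)) ≤ 0 := by
    intro t ht
    constructor
    · have := keyD t
      rwa [valeq t ht] at this
    · refine neg_nonpos.2 (intervalIntegral.integral_nonneg hab.le fun x _ => ?_)
      positivity
  refine ⟨main, ?_⟩
  have hWdiff : Differentiable ℝ W := fun s => (keyD s).differentiableAt
  refine antitoneOn_of_deriv_nonpos (convex_Icc 0 T) hWdiff.continuous.continuousOn
    (hWdiff.differentiableOn) ?_
  intro s hs
  rw [interior_Icc] at hs
  rw [((main s hs).1).deriv]
  exact (main s hs).2
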